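/- Let ω = e^{2πi/3}, p₁ := 4πi/√3, p₂ := (4πi/√3)ω, and F* := {t·p₁ + s·p₂ : t,s ∈ [0,1)}. Let h : ℂ → (0,∞) be any smooth function satisfying, for all k ∈ ℂ, h(k) = h(k+p₁) and h(k) = e^{√3·Re(k) − √3·π}·h(k+p₂). Then −(1/4π)·∫_{F*} Δ(log h)(k) dm(k) = −1, where Δ is the Laplacian on ℂ ≅ ℝ² and dm is Lebesgue measure. -/

import Mathlib

open Complex MeasureTheory

noncomputable section

/-- `ω = e^{2πi/3}`. -/
def ω : ℂ := Complex.exp (2 * (Real.pi : ℂ) * Complex.I / 3)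

/-- `p₁ = 4πi/√3`, the first generator of the dual lattice `Λ*`. -/
def p₁ : ℂ := 4 * (Real.pi : ℂ) * Complex.I / (Real.sqrt 3 : ℂ)

/-- `p₂ = (4πi/√3)ω`, the second generator of the dual lattice `Λ*`. -/
def p₂ : ℂ := (4 * (Real.pi : ℂ) * Complex.I / (Real.sqrt 3 : ℂ)) * ω

/-- The fundamental domain `F* = {t p₁ + s p₂ : t,s ∈ [0,1)}` of `Λ*`. -/
def Fstar : Set ℂ :=
  {k : ℂ | ∃ t s : ℝ, t ∈ Set.Ico (0 : ℝ) 1 ∧ s ∈ Set.Ico (0 : ℝ) 1 ∧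
    k = (t : ℂ) * p₁ + (s : ℂ) * p₂}

/-- The Laplacian `Δ = ∂²_{k₁} + ∂²_{k₂}` of a function on `ℂ ≅ ℝ²`. -/
def lap (f : ℂ → ℝ) : ℂ → ℝ := fun z =>
  fderiv ℝ (fun w => fderiv ℝ f w 1) z 1 +
  fderiv ℝ (fun w => fderiv ℝ f w Complex.I) z Complex.I

/-! ### auxiliary facts -/

lemma omega_re : ω.re = -(1/2) := by
  have : (2 * (Real.pi : ℂ) * Complex.I / 3) = ((2 * Real.pi / 3 : ℝ) : ℂ) * Complex.I := by
    push_cast; ring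
  rw [ω, this, Complex.exp_ofReal_mul_I_re]
  rw [show (2 * Real.pi / 3 : ℝ) = Real.pi - Real.pi / 3 by ring, Real.cos_pi_sub,
    Real.cos_pi_div_three]

lemma omega_im : ω.im = Real.sqrt 3 / 2 := by
  have : (2 * (Real.pi : ℂ) * Complex.I / 3) = ((2 * Real.pi / 3 : ℝ) : ℂ) * Complex.I := by
    push_cast; ring
  rw [ω, this, Complex.exp_ofReal_mul_I_im]
  rw [show (2 * Real.pi / 3 : ℝ) = Real.pi - Real.pi / 3 by ring, Real.sin_pi_sub,
    Real.sin_pi_div_three]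

lemma p1_re : p₁.re = 0 := by
  simp [p₁, Complex.div_re]

lemma p1_im : p₁.im = 4 * Real.pi / Real.sqrt 3 := by
  have h3 : (Real.sqrt 3 : ℝ) ≠ 0 := by positivity
  rw [p₁]
  rw [show (4 * (Real.pi : ℂ) * Complex.I / (Real.sqrt 3 : ℂ))
      = ((4*Real.pi/Real.sqrt 3 : ℝ):ℂ) * Complex.I by push_cast; field_simp]
  simp

lemma p2_re : p₂.re = -(2*Real.pi) := by
  have h3 : Real.sqrt 3 ≠ 0 := by positivity
  have hsq : Real.sqrt 3 * Real.sqrt 3 = 3 := Real.mul_self_sqrt (by norm_num)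
  rw [p₂, ← p₁, Complex.mul_re, p1_re, p1_im, omega_im]
  field_simp
  nlinarith [hsq]

lemma p2_im : p₂.im = -(2*Real.pi) / Real.sqrt 3 := by
  rw [p₂, ← p₁, Complex.mul_im, p1_re, p1_im, omega_re]
  ring

/-! ### the parametrization of the fundamental domain -/

/-- The linear parametrization `z ↦ z.re • q + z.im • r`. -/
def par (q r : ℂ) : ℂ → ℂ := fun z => z.re • q + z.im • r

/-- The determinant of `par q r`. -/
def dd (q r : ℂ) : ℝ := q.re * r.im - q.im * r.re

/-- `par q r` as a linear map. -/
def parL (q r : ℂ) : ℂ →ₗ[ℝ] ℂ where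
  toFun z := z.re • q + z.im • r
  map_add' z w := by simp [add_smul]; abel
  map_smul' c z := by
    simp only [Complex.smul_re, Complex.smul_im, RingHom.id_apply, smul_add, smul_smul,
      smul_eq_mul]

lemma parL_det (q r : ℂ) : LinearMap.det (parL q r) = dd q r := by
  rw [← LinearMap.det_toMatrix Complex.basisOneI, Matrix.det_fin_two]
  simp [LinearMap.toMatrix_apply, parL, Complex.coe_basisOneI_repr, dd]
  ring

/-- The unit box in `ℂ`. -/
def Sbox : Set ℂ := Complex.measurableEquivRealProd ⁻¹' (Set.Ico 0 1 ×ˢ Set.Ico 0 1)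

lemma measurableSet_Sbox : MeasurableSet Sbox :=
  Complex.measurableEquivRealProd.measurable (measurableSet_Ico.prod measurableSet_Ico)

lemma mem_Sbox (z : ℂ) : z ∈ Sbox ↔ z.re ∈ Set.Ico (0:ℝ) 1 ∧ z.im ∈ Set.Ico (0:ℝ) 1 :=
  Iff.rfl

lemma par_inj {q r : ℂ} (hd : dd q r ≠ 0) : Function.Injective (par q r) := by
  intro z w hzw
  have h1 : z.re * q.re + z.im * r.re = w.re * q.re + w.im * r.re := by
    have := congrArg Complex.re hzw
    simpa [par, Complex.add_re, Complex.smul_re] using this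
  have h2 : z.re * q.im + z.im * r.im = w.re * q.im + w.im * r.im := by
    have := congrArg Complex.im hzw
    simpa [par, Complex.add_im, Complex.smul_im] using this
  have hre : z.re = w.re := by
    have : (z.re - w.re) * dd q r = 0 := by
      rw [dd]; linear_combination r.im * h1 - r.re * h2
    rcases mul_eq_zero.1 this with h | h
    · linarith [sub_eq_zero.1 h]
    · exact absurd h hd
  have him : z.im = w.im := by
    have : (z.im - w.im) * dd q r = 0 := by
      rw [dd]; linear_combination q.re * h2 - q.im * h1
    rcases mul_eq_zero.1 this with h | h
    · linarith [sub_eq_zero.1 h]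
    · exact absurd h hd
  exact Complex.ext hre him

lemma changeVar (q r : ℂ) (hd : dd q r ≠ 0) (G : ℂ → ℝ) (hG : Continuous G) :
    ∫ k in par q r '' Sbox, G k
      = |dd q r| * ∫ t in Set.Ico (0:ℝ) 1, ∫ s in Set.Ico (0:ℝ) 1, G (t • q + s • r) := by
  have hpar : par q r = ⇑(LinearMap.toContinuousLinearMap (parL q r)) := rfl
  have hder : ∀ x ∈ Sbox, HasFDerivWithinAt (par q r)
      (LinearMap.toContinuousLinearMap (parL q r)) Sbox x := fun x _ => by
    rw [hpar]; exact (ContinuousLinearMap.hasFDerivAt _).hasFDerivWithinAt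
  have h1 := integral_image_eq_integral_abs_det_fderiv_smul volume measurableSet_Sbox hder
      ((par_inj hd).injOn) G
  rw [h1]
  have hdet : (LinearMap.toContinuousLinearMap (parL q r)).det = dd q r := by
    rw [ContinuousLinearMap.det, LinearMap.coe_toContinuousLinearMap, parL_det]
  simp only [hdet, ← hpar]
  rw [integral_smul, smul_eq_mul]
  congr 1
  have h2 := Complex.volume_preserving_equiv_real_prod.setIntegral_preimage_emb
      Complex.measurableEquivRealProd.measurableEmbedding
      (fun u : ℝ × ℝ => G (u.1 • q + u.2 • r)) (Set.Ico 0 1 ×ˢ Set.Ico 0 1)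
  have heq : (fun x : ℂ => G ((Complex.measurableEquivRealProd x).1 • q
      + (Complex.measurableEquivRealProd x).2 • r)) = fun x => G (par q r x) := rfl
  rw [heq] at h2
  rw [← Sbox] at h2
  rw [h2, Measure.volume_eq_prod]
  have hint : IntegrableOn (fun u : ℝ × ℝ => G (u.1 • q + u.2 • r))
      (Set.Ico 0 1 ×ˢ Set.Ico 0 1) (volume.prod volume) := by
    have hc : Continuous (fun u : ℝ × ℝ => G (u.1 • q + u.2 • r)) := by
      apply hG.comp
      exact ((continuous_fst.smul continuous_const).add (continuous_snd.smul continuous_const))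
    have : IntegrableOn (fun u : ℝ × ℝ => G (u.1 • q + u.2 • r))
        (Set.Icc 0 1 ×ˢ Set.Icc 0 1) (volume.prod volume) := by
      rw [← Measure.volume_eq_prod]
      exact hc.continuousOn.integrableOn_compact (isCompact_Icc.prod isCompact_Icc)
    exact this.mono_set (Set.prod_mono Set.Ico_subset_Icc_self Set.Ico_subset_Icc_self)
  rw [setIntegral_prod _ hint]

/-- Key lemma: the integral of the directional derivative in direction `r` of a function
that is `r`-periodic up to the constant `C` equals `|dd q r| * C`. -/
lemma key (q r : ℂ) (hd : dd q r ≠ 0) (F : ℂ → ℝ) (hF : ContDiff ℝ (⊤ : ℕ∞) F) (C : ℝ)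
    (hper : ∀ k, F (k + r) = F k + C) :
    ∫ k in par q r '' Sbox, fderiv ℝ F k r = |dd q r| * C := by
  have hdiff := hF.differentiable (by simp)
  have hG : Continuous (fun k => fderiv ℝ F k r) :=
    (hF.fderiv_right (m := (⊤ : ℕ∞)) (by simp)).continuous.clm_apply continuous_const
  rw [changeVar q r hd _ hG]
  congr 1
  have inner : ∀ t : ℝ, (∫ s in Set.Ico (0:ℝ) 1, fderiv ℝ F ((t:ℝ) • q + s • r) r) = C := by
    intro t
    rw [setIntegral_congr_set Ico_ae_eq_Ioc, ← intervalIntegral.integral_of_le zero_le_one]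
    have hval : ∀ s ∈ Set.uIcc (0:ℝ) 1,
        HasDerivAt (fun s : ℝ => F ((t:ℝ) • q + s • r)) (fderiv ℝ F ((t:ℝ) • q + s • r) r) s := by
      intro s _
      have hpath : HasDerivAt (fun s : ℝ => (t:ℝ) • q + s • r) r s := by
        simpa using ((hasDerivAt_id s).smul_const r).const_add ((t:ℝ) • q)
      exact (hdiff _).hasFDerivAt.comp_hasDerivAt s hpath
    have hci : Continuous (fun s : ℝ => fderiv ℝ F ((t:ℝ) • q + s • r) r) :=
      hG.comp (continuous_const.add (continuous_id.smul continuous_const))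
    rw [intervalIntegral.integral_eq_sub_of_hasDerivAt hval (hci.intervalIntegrable 0 1)]
    simp [hper]
  calc (∫ t in Set.Ico (0:ℝ) 1, ∫ s in Set.Ico (0:ℝ) 1, fderiv ℝ F ((t:ℝ) • q + s • r) r)
      = ∫ _t in Set.Ico (0:ℝ) 1, C := by
        exact setIntegral_congr_fun measurableSet_Ico (fun t _ => inner t)
    _ = C := by simp [Real.volume_Ico]

lemma Fstar_eq₁ : Fstar = par p₁ p₂ '' Sbox := by
  ext k
  constructor
  · rintro ⟨t, s, ht, hs, rfl⟩
    exact ⟨⟨t, s⟩, ⟨ht, hs⟩, by simp [par, Complex.real_smul]⟩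
  · rintro ⟨z, hz, rfl⟩
    exact ⟨z.re, z.im, hz.1, hz.2, by simp [par, Complex.real_smul]⟩

lemma Fstar_eq₂ : Fstar = par p₂ p₁ '' Sbox := by
  ext k
  constructor
  · rintro ⟨t, s, ht, hs, rfl⟩
    exact ⟨⟨s, t⟩, ⟨hs, ht⟩, by simp [par, Complex.real_smul]; ring⟩
  · rintro ⟨z, hz, rfl⟩
    exact ⟨z.im, z.re, hz.2, hz.1, by simp [par, Complex.real_smul]; ring⟩

lemma integrableOn_Fstar {G : ℂ → ℝ} (hG : Continuous G) : IntegrableOn G Fstar := by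
  have hK : IsCompact ((fun u : ℝ × ℝ => u.1 • p₁ + u.2 • p₂) ''
      (Set.Icc 0 1 ×ˢ Set.Icc 0 1)) :=
    (isCompact_Icc.prod isCompact_Icc).image
      ((continuous_fst.smul continuous_const).add (continuous_snd.smul continuous_const))
  refine (hG.continuousOn.integrableOn_compact hK).mono_set ?_
  rintro k ⟨t, s, ht, hs, rfl⟩
  exact ⟨⟨t, s⟩, ⟨Set.Ico_subset_Icc_self ht, Set.Ico_subset_Icc_self hs⟩,
    by simp [Complex.real_smul]⟩

/-- If `F (k + p) = F k + a * k.re + C` then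
`fderiv F (k+p) v = fderiv F k v + a * v.re`. -/
lemma fderiv_shift (F : ℂ → ℝ) (hF : ContDiff ℝ (⊤ : ℕ∞) F) (p : ℂ) (a C : ℝ)
    (hL : ∀ k, F (k + p) = F k + a * k.re + C) (k v : ℂ) :
    fderiv ℝ F (k + p) v = fderiv ℝ F k v + a * v.re := by
  have hd := hF.differentiable (by simp)
  have h1 : HasFDerivAt (fun x : ℂ => F (x + p)) (fderiv ℝ F (k + p)) k := by
    have := (hd (k + p)).hasFDerivAt.comp k ((hasFDerivAt_id k).add_const p)
    exact this
  have h2 : HasFDerivAt (fun x : ℂ => F x + a * x.re + C)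
      (fderiv ℝ F k + a • Complex.reCLM) k := by
    exact ((hd k).hasFDerivAt.add ((Complex.reCLM.hasFDerivAt (x := k)).const_mul a)).add_const C
  rw [show (fun x : ℂ => F (x + p)) = (fun x : ℂ => F x + a * x.re + C) from funext hL] at h1
  rw [h1.unique h2]
  simp [smul_eq_mul]

lemma sqrt3_pos : (0:ℝ) < Real.sqrt 3 := Real.sqrt_pos.2 (by norm_num)

lemma dd_p1p2 : dd p₁ p₂ = 8 * Real.pi ^ 2 / Real.sqrt 3 := by
  rw [dd, p1_re, p1_im, p2_re]
  field_simp
  ring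

lemma dd_p1p2_ne : dd p₁ p₂ ≠ 0 := by
  rw [dd_p1p2]
  positivity

lemma dd_p2p1_ne : dd p₂ p₁ ≠ 0 := by
  have : dd p₂ p₁ = -dd p₁ p₂ := by rw [dd]; rw [dd]; ring
  rw [this, neg_ne_zero]
  exact dd_p1p2_ne

lemma one_decomp : (1:ℂ) = (-(1/(4*Real.pi))) • p₁ + (-(1/(2*Real.pi))) • p₂ := by
  have hπ : Real.pi ≠ 0 := Real.pi_ne_zero
  have h3 : Real.sqrt 3 ≠ 0 := sqrt3_pos.ne'
  apply Complex.ext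
  · simp [Complex.add_re, Complex.smul_re, p1_re, p2_re]
    field_simp
  · simp [Complex.add_im, Complex.smul_im, p1_im, p2_im]
    field_simp
    ring

lemma I_decomp : Complex.I = ((Real.sqrt 3/(4*Real.pi) : ℝ)) • p₁ := by
  have hπC : (Real.pi : ℂ) ≠ 0 := by exact_mod_cast Real.pi_ne_zero
  have h3C : ((Real.sqrt 3 : ℝ) : ℂ) ≠ 0 := by exact_mod_cast sqrt3_pos.ne'
  rw [Complex.real_smul, p₁]
  push_cast
  field_simp

theorem stmt19 (h : ℂ → ℝ) (hsm : ContDiff ℝ (⊤ : ℕ∞) h) (hpos : ∀ k : ℂ, 0 < h k)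
    (htrans1 : ∀ k : ℂ, h k = h (k + p₁))
    (htrans2 : ∀ k : ℂ,
      h k = Real.exp (Real.sqrt 3 * k.re - Real.sqrt 3 * Real.pi) * h (k + p₂)) :
    -(1 / (4 * Real.pi)) * ∫ k in Fstar, lap (fun w => Real.log (h w)) k = -1 := by
  have hπ : Real.pi ≠ 0 := Real.pi_ne_zero
  have h3 : Real.sqrt 3 ≠ 0 := sqrt3_pos.ne'
  set logh : ℂ → ℝ := fun k => Real.log (h k) with hlogh_def
  have hlog : ContDiff ℝ (⊤ : ℕ∞) logh := hsm.log (fun k => (hpos k).ne')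
  -- periodicity of logh
  have hper1 : ∀ k, logh (k + p₁) = logh k + 0 * k.re + 0 := by
    intro k; simp [hlogh_def, ← htrans1 k]
  have hper2 : ∀ k, logh (k + p₂) = logh k + (-(Real.sqrt 3)) * k.re + Real.sqrt 3 * Real.pi := by
    intro k
    have := htrans2 k
    have hlogeq : Real.log (h k)
        = (Real.sqrt 3 * k.re - Real.sqrt 3 * Real.pi) + Real.log (h (k + p₂)) := by
      rw [this, Real.log_mul (Real.exp_ne_zero _) (hpos _).ne', Real.log_exp]
    simp only [hlogh_def]
    rw [hlogeq]; ring
  -- first directional derivatives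
  set F₁ : ℂ → ℝ := fun w => fderiv ℝ logh w 1 with hF₁_def
  set F₂ : ℂ → ℝ := fun w => fderiv ℝ logh w Complex.I with hF₂_def
  have hF₁ : ContDiff ℝ (⊤ : ℕ∞) F₁ := (hlog.fderiv_right (m := (⊤ : ℕ∞)) (by simp)).clm_apply contDiff_const
  have hF₂ : ContDiff ℝ (⊤ : ℕ∞) F₂ := (hlog.fderiv_right (m := (⊤ : ℕ∞)) (by simp)).clm_apply contDiff_const
  have hF₁p₁ : ∀ k, F₁ (k + p₁) = F₁ k + 0 := by
    intro k; simpa using fderiv_shift logh hlog p₁ 0 0 hper1 k 1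
  have hF₂p₁ : ∀ k, F₂ (k + p₁) = F₂ k + 0 := by
    intro k; simpa using fderiv_shift logh hlog p₁ 0 0 hper1 k Complex.I
  have hF₁p₂ : ∀ k, F₁ (k + p₂) = F₁ k + (-(Real.sqrt 3)) := by
    intro k
    simpa using fderiv_shift logh hlog p₂ (-(Real.sqrt 3)) (Real.sqrt 3 * Real.pi) hper2 k 1
  -- continuity of second-derivative integrands
  have hcont : ∀ (F : ℂ → ℝ) (_ : ContDiff ℝ (⊤ : ℕ∞) F) (v : ℂ),
      Continuous (fun k => fderiv ℝ F k v) := fun F hF v =>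
    (hF.fderiv_right (m := (⊤ : ℕ∞)) (by simp)).continuous.clm_apply continuous_const
  -- decomposition of lap
  have hlap : ∀ k, lap logh k
      = (-(1/(4*Real.pi))) * fderiv ℝ F₁ k p₁ + (-(1/(2*Real.pi))) * fderiv ℝ F₁ k p₂
        + (Real.sqrt 3/(4*Real.pi)) * fderiv ℝ F₂ k p₁ := by
    intro k
    have e1 : fderiv ℝ F₁ k 1
        = (-(1/(4*Real.pi))) * fderiv ℝ F₁ k p₁ + (-(1/(2*Real.pi))) * fderiv ℝ F₁ k p₂ := by
      conv_lhs => rw [one_decomp]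
      simp only [map_add, ContinuousLinearMap.map_smul, smul_eq_mul]
    have e2 : fderiv ℝ F₂ k Complex.I = (Real.sqrt 3/(4*Real.pi)) * fderiv ℝ F₂ k p₁ := by
      conv_lhs => rw [I_decomp]
      simp only [ContinuousLinearMap.map_smul, smul_eq_mul]
    show fderiv ℝ F₁ k 1 + fderiv ℝ F₂ k Complex.I = _
    rw [e1, e2]
  -- the three integrals
  have int1 : (∫ k in Fstar, fderiv ℝ F₁ k p₁) = 0 := by
    rw [Fstar_eq₂, key p₂ p₁ dd_p2p1_ne F₁ hF₁ 0 hF₁p₁, mul_zero]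
  have int3 : (∫ k in Fstar, fderiv ℝ F₂ k p₁) = 0 := by
    rw [Fstar_eq₂, key p₂ p₁ dd_p2p1_ne F₂ hF₂ 0 hF₂p₁, mul_zero]
  have int2 : (∫ k in Fstar, fderiv ℝ F₁ k p₂) = -(8 * Real.pi ^ 2) := by
    rw [Fstar_eq₁, key p₁ p₂ dd_p1p2_ne F₁ hF₁ (-(Real.sqrt 3)) hF₁p₂]
    rw [abs_of_pos (by rw [dd_p1p2]; positivity), dd_p1p2]
    field_simp
  -- integrability
  have i1 : IntegrableOn (fun k => fderiv ℝ F₁ k p₁) Fstar := integrableOn_Fstar (hcont F₁ hF₁ p₁)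
  have i2 : IntegrableOn (fun k => fderiv ℝ F₁ k p₂) Fstar := integrableOn_Fstar (hcont F₁ hF₁ p₂)
  have i3 : IntegrableOn (fun k => fderiv ℝ F₂ k p₁) Fstar := integrableOn_Fstar (hcont F₂ hF₂ p₁)
  -- assemble
  have hsplit : (∫ k in Fstar, lap logh k)
      = (-(1/(4*Real.pi))) * (∫ k in Fstar, fderiv ℝ F₁ k p₁)
        + (-(1/(2*Real.pi))) * (∫ k in Fstar, fderiv ℝ F₁ k p₂)
        + (Real.sqrt 3/(4*Real.pi)) * (∫ k in Fstar, fderiv ℝ F₂ k p₁) := by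
    calc (∫ k in Fstar, lap logh k)
        = ∫ k in Fstar, ((-(1/(4*Real.pi))) * fderiv ℝ F₁ k p₁
            + (-(1/(2*Real.pi))) * fderiv ℝ F₁ k p₂
            + (Real.sqrt 3/(4*Real.pi)) * fderiv ℝ F₂ k p₁) :=
          integral_congr_ae (Filter.Eventually.of_forall fun k => hlap k)
      _ = (∫ k in Fstar, ((-(1/(4*Real.pi))) * fderiv ℝ F₁ k p₁
            + (-(1/(2*Real.pi))) * fderiv ℝ F₁ k p₂))
          + ∫ k in Fstar, (Real.sqrt 3/(4*Real.pi)) * fderiv ℝ F₂ k p₁ :=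
          integral_add ((i1.const_mul _).add (i2.const_mul _)) (i3.const_mul _)
      _ = ((∫ k in Fstar, (-(1/(4*Real.pi))) * fderiv ℝ F₁ k p₁)
            + ∫ k in Fstar, (-(1/(2*Real.pi))) * fderiv ℝ F₁ k p₂)
          + ∫ k in Fstar, (Real.sqrt 3/(4*Real.pi)) * fderiv ℝ F₂ k p₁ := by
          rw [integral_add (i1.const_mul _) (i2.const_mul _)]
      _ = (-(1/(4*Real.pi))) * (∫ k in Fstar, fderiv ℝ F₁ k p₁)
            + (-(1/(2*Real.pi))) * (∫ k in Fstar, fderiv ℝ F₁ k p₂)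
            + (Real.sqrt 3/(4*Real.pi)) * (∫ k in Fstar, fderiv ℝ F₂ k p₁) := by
          rw [integral_const_mul, integral_const_mul, integral_const_mul]
  have : (∫ k in Fstar, lap logh k) = 4 * Real.pi := by
    rw [hsplit, int1, int2, int3]
    field_simp
    ring
  rw [this]
  field_simp
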